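/- For every α > 0 there exists N_0 such that for all N ≥ N_0 the following holds: if L : R^4 → R^4 is the block map L(v_c, v_a) = (S v_c + P v_a, A^{[2N]} v_a) with ‖S‖ ≤ 2N, m(S) ≥ 1/(2N), ‖P‖ ≤ λ^{-N}, then L maps the unstable cone C^u_α = {(v_c, v_s, v_u) : ‖v_c + v_s‖ ≤ α‖v_u‖} into itself, where (v_s, v_u) are coordinates of v_a in the eigenbasis of A. -/
import Mathlib

set_option maxHeartbeats 1000000


/-- Cone invariance: for every `α > 0` there is `N₀` such that for all `N ≥ N₀`,
any block map `L(v_c,v_a) = (S v_c + P v_a, A^{2N} v_a)` with `‖S‖ ≤ 2N`,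
`m(S) ≥ 1/(2N)` and `‖P‖ ≤ λ^{-N}` maps the unstable cone
`C^u_α = {(v_c,v_s,v_u) : ‖v_c + v_s‖ ≤ α‖v_u‖}` into itself (coordinates
`(v_s,v_u)` in the eigenbasis of the hyperbolic matrix `A`, with eigenvalues
`λ < 1 < λ⁻¹`, so `A^{2N}` acts by `v_s ↦ λ^{2N} v_s`, `v_u ↦ λ^{-2N} v_u`,
and `P v_a = v_s • Ps + v_u • Pu` with `‖Ps‖, ‖Pu‖ ≤ λ^{-N}`). -/
theorem unstable_cone_invariance (lam α : ℝ) (h0 : 0 < lam) (h1 : lam < 1)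
    (hα : 0 < α) :
    ∃ N₀ : ℕ, ∀ N ≥ N₀, ∀ (S : (ℝ × ℝ) →L[ℝ] (ℝ × ℝ)) (Ps Pu : ℝ × ℝ),
      ‖S‖ ≤ 2 * N →
      (∀ v : ℝ × ℝ, (1 / (2 * N)) * ‖v‖ ≤ ‖S v‖) →
      ‖Ps‖ ≤ lam⁻¹ ^ N → ‖Pu‖ ≤ lam⁻¹ ^ N →
      ∀ (vc : ℝ × ℝ) (vs vu : ℝ),
        Real.sqrt (‖vc‖ ^ 2 + vs ^ 2) ≤ α * |vu| →
        Real.sqrt (‖S vc + vs • Ps + vu • Pu‖ ^ 2 + (lam ^ (2 * N) * vs) ^ 2)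
          ≤ α * |lam⁻¹ ^ (2 * N) * vu| := by
  set b := lam⁻¹ with hbdef
  have hb : 1 < b := (one_lt_inv_iff₀).mpr ⟨h0, h1⟩
  have hb0 : (0:ℝ) < b := lt_trans one_pos hb
  have hδ : (0:ℝ) < b - 1 := sub_pos.mpr hb
  set δ := b - 1 with hδdef
  set C := 2 * α / δ + 2 * α + 1 with hCdef
  have hC : 0 < C := by positivity
  have htend : Filter.Tendsto (fun N : ℕ => b ^ N) Filter.atTop Filter.atTop :=
    tendsto_pow_atTop_atTop_of_one_lt hb
  obtain ⟨N₀, hN₀⟩ := Filter.eventually_atTop.mp (htend.eventually_ge_atTop (C / α))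
  refine ⟨N₀, fun N hN S Ps Pu hS _hconorm hPs hPu vc vs vu hcone => ?_⟩
  have htN : C / α ≤ b ^ N := hN₀ N hN
  have hbN1 : (1:ℝ) ≤ b ^ N := one_le_pow₀ hb.le
  have hbern : 1 + (N:ℝ) * δ ≤ b ^ N := by
    have h := one_add_mul_le_pow (by linarith : (-2:ℝ) ≤ δ) N
    have : 1 + δ = b := by simp [hδdef]
    rw [this] at h
    exact h
  have hNle : (N:ℝ) * δ ≤ b ^ N := by linarith
  -- key inequality
  have key : 2 * (N:ℝ) * α + (α + 1) * b ^ N + α ≤ α * b ^ (2 * N) := by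
    have hpow : b ^ (2 * N) = b ^ N * b ^ N := by
      rw [two_mul, pow_add]
    have ht0 : (0:ℝ) < b ^ N := by positivity
    have hCt : C ≤ α * b ^ N := by
      rw [div_le_iff₀ hα] at htN
      linarith [htN]
    -- 2Nα ≤ (2α/δ) * b^N
    have h2N : 2 * (N:ℝ) * α ≤ (2 * α / δ) * b ^ N := by
      rw [div_mul_eq_mul_div, le_div_iff₀ hδ]
      nlinarith [hNle, hα.le]
    have hLHS : 2 * (N:ℝ) * α + (α + 1) * b ^ N + α ≤ C * b ^ N := by
      have hα1 : α ≤ α * b ^ N := le_mul_of_one_le_right hα.le hbN1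
      rw [hCdef]
      nlinarith
    calc 2 * (N:ℝ) * α + (α + 1) * b ^ N + α ≤ C * b ^ N := hLHS
      _ ≤ (α * b ^ N) * b ^ N := mul_le_mul_of_nonneg_right hCt ht0.le
      _ = α * b ^ (2 * N) := by rw [hpow]; ring
  -- bounds from the cone hypothesis
  have hvc2 : ‖vc‖ ≤ α * |vu| := by
    have h1' : ‖vc‖ ≤ Real.sqrt (‖vc‖ ^ 2 + vs ^ 2) := by
      nth_rewrite 1 [show ‖vc‖ = Real.sqrt (‖vc‖ ^ 2) from (Real.sqrt_sq (norm_nonneg _)).symm]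
      exact Real.sqrt_le_sqrt (by nlinarith [sq_nonneg vs])
    linarith
  have hvs2 : |vs| ≤ α * |vu| := by
    have h1' : |vs| ≤ Real.sqrt (‖vc‖ ^ 2 + vs ^ 2) := by
      nth_rewrite 1 [show |vs| = Real.sqrt (vs ^ 2) from (Real.sqrt_sq_eq_abs vs).symm]
      exact Real.sqrt_le_sqrt (by nlinarith [sq_nonneg ‖vc‖])
    linarith
  set X := ‖S vc + vs • Ps + vu • Pu‖ with hXdef
  set Y := lam ^ (2 * N) * vs with hYdef
  have hX0 : 0 ≤ X := norm_nonneg _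
  -- bound on X
  have hX : X ≤ 2 * N * (α * |vu|) + (α * |vu|) * b ^ N + |vu| * b ^ N := by
    have t1 : ‖S vc‖ ≤ 2 * N * (α * |vu|) := by
      calc ‖S vc‖ ≤ ‖S‖ * ‖vc‖ := S.le_opNorm vc
        _ ≤ 2 * N * (α * |vu|) := by
            apply mul_le_mul hS hvc2 (norm_nonneg _) (by positivity)
    have t2 : ‖vs • Ps‖ ≤ (α * |vu|) * b ^ N := by
      rw [norm_smul, Real.norm_eq_abs]
      apply mul_le_mul hvs2 hPs (norm_nonneg _) (by positivity)
    have t3 : ‖vu • Pu‖ ≤ |vu| * b ^ N := by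
      rw [norm_smul, Real.norm_eq_abs]
      exact mul_le_mul_of_nonneg_left hPu (abs_nonneg _)
    calc X ≤ ‖S vc‖ + ‖vs • Ps‖ + ‖vu • Pu‖ := norm_add₃_le
      _ ≤ _ := by linarith
  -- bound on Y
  have hY : |Y| ≤ α * |vu| := by
    rw [hYdef, abs_mul, abs_of_pos (by positivity : (0:ℝ) < lam ^ (2 * N))]
    calc lam ^ (2 * N) * |vs| ≤ 1 * |vs| :=
          mul_le_mul_of_nonneg_right (pow_le_one₀ h0.le h1.le) (abs_nonneg _)
      _ = |vs| := one_mul _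
      _ ≤ α * |vu| := hvs2
  -- sqrt bound
  have hsqrt : Real.sqrt (X ^ 2 + Y ^ 2) ≤ X + |Y| := by
    rw [show X + |Y| = Real.sqrt ((X + |Y|) ^ 2) from
      (Real.sqrt_sq (by positivity)).symm]
    exact Real.sqrt_le_sqrt (by nlinarith [abs_nonneg Y, sq_abs Y])
  have hRHS : α * |b ^ (2 * N) * vu| = α * b ^ (2 * N) * |vu| := by
    rw [abs_mul, abs_of_pos (by positivity : (0:ℝ) < b ^ (2 * N))]; ring
  rw [hRHS]
  have hkeyv : (2 * (N:ℝ) * α + (α + 1) * b ^ N + α) * |vu| ≤ α * b ^ (2 * N) * |vu| :=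
    mul_le_mul_of_nonneg_right key (abs_nonneg vu)
  calc Real.sqrt (X ^ 2 + Y ^ 2) ≤ X + |Y| := hsqrt
    _ ≤ (2 * (N:ℝ) * α + (α + 1) * b ^ N + α) * |vu| := by
        linarith [hX, hY]
    _ ≤ α * b ^ (2 * N) * |vu| := hkeyv
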